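/- arXiv:1312.2206 — 6 statements merged into one kernel-verified Lean document; each statement's English description precedes it below -/
import Mathlib

section
/- Let u : [0,1] → ℝ be continuous with u(σ) > 0 on (0,1], and define λ(σ) = √(2 ∫₀^σ u(σ₁) dσ₁). Then λ(0) = 0, λ is differentiable on (0,1] with λ(σ)λ'(σ) = u(σ) and λ'(σ) ≥ 0, and the functionals transform as: -∫₀¹ u(σ) log u(σ) dσ = -∫₀¹ λ(σ)λ'(σ) log(λ(σ)λ'(σ)) dσ and -∫₀¹ (u(σ) log u(σ)) / √(∫₀^σ u(σ₁) dσ₁) dσ = -√2 ∫₀¹ λ'(σ) log(λ(σ)λ'(σ)) dσ. -/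
open MeasureTheory Real

/-!
With `F σ = ∫₀^σ u` we have `λ = √(2F)` and, by the fundamental theorem of calculus, `F' = u`,
so `λ' = u / λ` wherever `F > 0`, i.e. on `(0,1]`. There `λ λ' = u` and `√F = λ / √2`, which turns
both integrands into the transformed ones pointwise on `(0,1)`; the endpoints do not matter.
-/

open Set intervalIntegral

variable {u : ℝ → ℝ} {a b x : ℝ}

theorem ContinuousOn.hasDerivWithinAt_integral_Icc (hu : ContinuousOn u (Icc a b))
    (hx : x ∈ Icc a b) :
    HasDerivWithinAt (fun σ => ∫ t in a..σ, u t) (u x) (Icc a b) x := by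
  have : Fact (x ∈ Icc a b) := ⟨hx⟩
  refine integral_hasDerivWithinAt_right ?_
    (hu.stronglyMeasurableAtFilter_nhdsWithin measurableSet_Icc x) (hu.continuousWithinAt hx)
  refine (hu.mono ?_).intervalIntegrable
  rw [uIcc_of_le hx.1]
  exact Icc_subset_Icc_right hx.2

theorem ContinuousOn.hasDerivWithinAt_sqrt_two_mul_integral (hu : ContinuousOn u (Icc a b))
    (hx : x ∈ Icc a b) (hF : 0 < ∫ t in a..x, u t) :
    HasDerivWithinAt (fun σ => √(2 * ∫ t in a..σ, u t))
      (u x / √(2 * ∫ t in a..x, u t)) (Icc a b) x := by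
  convert ((hu.hasDerivWithinAt_integral_Icc hx).const_mul 2).sqrt (by positivity) using 1
  rw [mul_div_mul_left _ _ two_ne_zero]

theorem ContinuousOn.derivWithin_sqrt_two_mul_integral (hu : ContinuousOn u (Icc a b))
    (hab : a < b) (hx : x ∈ Icc a b) (hF : 0 < ∫ t in a..x, u t) :
    derivWithin (fun σ => √(2 * ∫ t in a..σ, u t)) (Icc a b) x =
      u x / √(2 * ∫ t in a..x, u t) :=
  (hu.hasDerivWithinAt_sqrt_two_mul_integral hx hF).derivWithin (uniqueDiffOn_Icc hab x hx)

theorem integral_pos_of_continuousOn_of_pos_on_Ioc (hu : ContinuousOn u (Icc a b))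
    (hpos : ∀ σ ∈ Ioc a b, 0 < u σ) (hx : x ∈ Ioc a b) : 0 < ∫ t in a..x, u t := by
  refine intervalIntegral_pos_of_pos_on ?_ (fun σ hσ => hpos σ ⟨hσ.1, hσ.2.le.trans hx.2⟩) hx.1
  refine (hu.mono ?_).intervalIntegrable
  rw [uIcc_of_le hx.1.le]
  exact Icc_subset_Icc_right hx.2

/-- Let `u : [0,1] → ℝ` be continuous with `u > 0` on `(0,1]`, and let
`λ(σ) = √(2 ∫₀^σ u)`.  Then `λ(0) = 0`, `λ` is differentiable on `(0,1]`
(within `[0,1]`) with `λ λ' = u` and `λ' ≥ 0`, and the functionals transform as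
`-∫₀¹ u log u = -∫₀¹ λλ' log(λλ')` and
`-∫₀¹ (u log u)/√(∫₀^σ u) = -√2 ∫₀¹ λ' log(λλ')`. -/
theorem functional_transformation (u : ℝ → ℝ)
    (hcont : ContinuousOn u (Set.Icc (0:ℝ) 1))
    (hpos : ∀ σ ∈ Set.Ioc (0:ℝ) 1, 0 < u σ)
    (lam : ℝ → ℝ)
    (hlam : ∀ σ, lam σ = Real.sqrt (2 * ∫ t in (0:ℝ)..σ, u t)) :
    lam 0 = 0 ∧
    (∀ σ ∈ Set.Ioc (0:ℝ) 1,
      DifferentiableWithinAt ℝ lam (Set.Icc (0:ℝ) 1) σ ∧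
      lam σ * derivWithin lam (Set.Icc (0:ℝ) 1) σ = u σ ∧
      0 ≤ derivWithin lam (Set.Icc (0:ℝ) 1) σ) ∧
    (-∫ σ in (0:ℝ)..1, u σ * Real.log (u σ)) =
      (-∫ σ in (0:ℝ)..1,
        lam σ * derivWithin lam (Set.Icc (0:ℝ) 1) σ *
          Real.log (lam σ * derivWithin lam (Set.Icc (0:ℝ) 1) σ)) ∧
    (-∫ σ in (0:ℝ)..1,
        (u σ * Real.log (u σ)) / Real.sqrt (∫ t in (0:ℝ)..σ, u t)) =
      -Real.sqrt 2 * ∫ σ in (0:ℝ)..1,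
        derivWithin lam (Set.Icc (0:ℝ) 1) σ *
          Real.log (lam σ * derivWithin lam (Set.Icc (0:ℝ) 1) σ) := by
  have hlam_eq : lam = fun σ => √(2 * ∫ t in (0:ℝ)..σ, u t) := funext hlam
  have hF := fun σ (hσ : σ ∈ Ioc (0:ℝ) 1) =>
    integral_pos_of_continuousOn_of_pos_on_Ioc hcont hpos hσ
  have hlam_pos : ∀ σ ∈ Ioc (0:ℝ) 1, 0 < lam σ := fun σ hσ => by
    rw [hlam]; have := hF σ hσ; positivity
  have hderiv : ∀ σ ∈ Ioc (0:ℝ) 1, derivWithin lam (Icc 0 1) σ = u σ / lam σ := fun σ hσ => by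
    rw [hlam_eq]
    exact hcont.derivWithin_sqrt_two_mul_integral one_pos (Ioc_subset_Icc_self hσ) (hF σ hσ)
  have hmul : ∀ σ ∈ Ioc (0:ℝ) 1, lam σ * derivWithin lam (Icc 0 1) σ = u σ := fun σ hσ => by
    rw [hderiv σ hσ, mul_div_cancel₀ _ (hlam_pos σ hσ).ne']
  have hsqrt : ∀ σ ∈ Ioc (0:ℝ) 1, √(∫ t in (0:ℝ)..σ, u t) = lam σ / √2 := fun σ hσ => by
    rw [hlam, sqrt_mul zero_le_two, mul_div_cancel_left₀ _ (by positivity)]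
  refine ⟨by simp [hlam], fun σ hσ => ⟨?_, hmul σ hσ, ?_⟩, ?_, ?_⟩
  · rw [hlam_eq]
    exact (hcont.hasDerivWithinAt_sqrt_two_mul_integral (Ioc_subset_Icc_self hσ)
      (hF σ hσ)).differentiableWithinAt
  · rw [hderiv σ hσ]
    exact div_nonneg (hpos σ hσ).le (hlam_pos σ hσ).le
  · refine congrArg Neg.neg (integral_congr_uIoo fun σ hσ => ?_)
    rw [uIoo_of_le zero_le_one] at hσ
    simp only [hmul σ (Ioo_subset_Ioc_self hσ)]
  · rw [neg_mul, ← intervalIntegral.integral_const_mul]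
    refine congrArg Neg.neg (integral_congr_uIoo fun σ hσ => ?_)
    rw [uIoo_of_le zero_le_one] at hσ
    replace hσ := Ioo_subset_Ioc_self hσ
    rw [hmul σ hσ, hsqrt σ hσ, hderiv σ hσ]
    field_simp [(hlam_pos σ hσ).ne']
end

section
/- Fix b ∈ (√(2/e), √2) and set k = K(b) = -(e-1)b(b²e - 2)/(2 + (e-2)b²e), a = (b²e - 2)/((e-1)b), c = (2 - b²)/(2 + (e-2)b²e), and γ = a²/2. Then the piecewise function λ(σ) = √(2σ) for 0 ≤ σ < γ and λ(σ) = -k + √(2c(σ - γ) + (a+k)²) for γ ≤ σ ≤ 1 is continuous, satisfies λ(0) = 0, λ'(σ) ≥ 0 and λ(σ)λ'(σ) ≤ 1 on [0,1] (so λ is admissible), and its functional values are I[λ] = q(b) = (1/2)[b² - k² + k(b - a) - k² log(b/a)] and J[λ] = J_min(b) = √2 (k log(b/a) + b + k). -/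
/-!
On `[0, a²/2]` the profile `√(2σ)` saturates the Brillouin condition, `λ λ' = 1`, so both
integrands vanish there. On the tail `λ` solves `λ' = c / (λ + k)`, hence `λ λ' = c λ / (λ + k)`
and the substitution `u = λ(σ)` turns the two functionals into `-∫ₐᵇ u log (c u / (u + k)) du`
and `-√2 ∫ₐᵇ log (c u / (u + k)) du`, which have elementary primitives. The identities
`a + k = a c` and `b + k = b e c` collapse the boundary terms to the closed forms. Nonnegativity
of `λ'` everywhere, including at `σ = 0` where `λ` is not differentiable, comes from monotonicity.
-/

open MeasureTheory Real

/-- The functional `I[λ] = -∫₀¹ λλ' log(λλ') dσ`. -/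
noncomputable def lamLift (lam : ℝ → ℝ) : ℝ :=
  -∫ σ in (0:ℝ)..1, lam σ * deriv lam σ * Real.log (lam σ * deriv lam σ)

/-- The functional `J[λ] = -√2 ∫₀¹ λ' log(λλ') dσ`. -/
noncomputable def lamDrag (lam : ℝ → ℝ) : ℝ :=
  -Real.sqrt 2 * ∫ σ in (0:ℝ)..1, deriv lam σ * Real.log (lam σ * deriv lam σ)

open Set
open scoped Interval

noncomputable def profileTail (a c k σ : ℝ) : ℝ :=
  -k + √(2 * c * (σ - a ^ 2 / 2) + (a + k) ^ 2)

/-- The paper's `λ`, with the junction `γ` written as `a ^ 2 / 2`, where `a = λ(γ)`. -/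
noncomputable def profile (a c k σ : ℝ) : ℝ :=
  if σ < a ^ 2 / 2 then √(2 * σ) else profileTail a c k σ

section Profile

variable {a c k σ : ℝ}

lemma sqrt_two_mul_sq_div_two (ha : 0 ≤ a) : √(2 * (a ^ 2 / 2)) = a := by
  rw [mul_div_cancel₀ _ two_ne_zero, sqrt_sq ha]

lemma profileTail_sq_div_two (hak : 0 ≤ a + k) : profileTail a c k (a ^ 2 / 2) = a := by
  rw [profileTail, sub_self, mul_zero, zero_add, sqrt_sq hak]
  ring

lemma profileTail_eq_of_sq_eq {u : ℝ} (hu : 0 ≤ u + k)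
    (hsq : 2 * c * (σ - a ^ 2 / 2) + (a + k) ^ 2 = (u + k) ^ 2) : profileTail a c k σ = u := by
  rw [profileTail, hsq, sqrt_sq hu]
  ring

lemma profile_of_lt (h : σ < a ^ 2 / 2) : profile a c k σ = √(2 * σ) := if_pos h

lemma profile_of_ge (h : a ^ 2 / 2 ≤ σ) : profile a c k σ = profileTail a c k σ :=
  if_neg h.not_gt

lemma profile_of_le (ha : 0 ≤ a) (hak : 0 ≤ a + k) (h : σ ≤ a ^ 2 / 2) :
    profile a c k σ = √(2 * σ) := by
  rcases h.lt_or_eq with h | rfl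
  · exact profile_of_lt h
  · rw [profile_of_ge le_rfl, profileTail_sq_div_two hak, sqrt_two_mul_sq_div_two ha]

lemma profile_sq_div_two (hak : 0 ≤ a + k) : profile a c k (a ^ 2 / 2) = a := by
  rw [profile_of_ge le_rfl, profileTail_sq_div_two hak]

lemma profile_zero (ha : 0 < a) : profile a c k 0 = 0 := by
  rw [profile_of_lt (by positivity), mul_zero, sqrt_zero]

lemma continuous_profileTail : Continuous (profileTail a c k) := by
  unfold profileTail
  fun_prop

lemma continuous_profile (ha : 0 ≤ a) (hak : 0 ≤ a + k) : Continuous (profile a c k) := by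
  have : profile a c k = fun σ ↦ if a ^ 2 / 2 ≤ σ then profileTail a c k σ else √(2 * σ) := by
    ext σ
    unfold profile
    split_ifs <;> first | rfl | linarith
  rw [this]
  refine continuous_profileTail.if_le (by fun_prop) continuous_const continuous_id ?_
  rintro σ rfl
  rw [profileTail_sq_div_two hak, sqrt_two_mul_sq_div_two ha]

lemma monotone_profileTail (hc : 0 ≤ c) : Monotone (profileTail a c k) := by
  intro σ τ h
  unfold profileTail
  gcongr

lemma monotone_profile (ha : 0 ≤ a) (hc : 0 ≤ c) (hak : 0 ≤ a + k) :
    Monotone (profile a c k) := by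
  refine MonotoneOn.Iic_union_Ici (a := a ^ 2 / 2) ?_ ?_
  · intro σ hσ τ hτ h
    rw [profile_of_le ha hak hσ, profile_of_le ha hak hτ]
    gcongr
  · intro σ hσ τ hτ h
    rw [profile_of_ge hσ, profile_of_ge hτ]
    exact monotone_profileTail hc h

lemma le_profile (ha : 0 ≤ a) (hc : 0 ≤ c) (hak : 0 ≤ a + k) (h : a ^ 2 / 2 ≤ σ) :
    a ≤ profile a c k σ := by
  simpa only [profile_sq_div_two hak] using monotone_profile ha hc hak h

lemma hasDerivAt_sqrt_two_mul (h : 0 < σ) : HasDerivAt (fun τ ↦ √(2 * τ)) (1 / √(2 * σ)) σ := by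
  refine (((hasDerivAt_id' σ).const_mul 2).sqrt (mul_pos two_pos h).ne').congr_deriv ?_
  field_simp

lemma hasDerivAt_profileTail (hc : 0 ≤ c) (hak : 0 < a + k) (h : a ^ 2 / 2 ≤ σ) :
    HasDerivAt (profileTail a c k) (c / (profileTail a c k σ + k)) σ := by
  have hpos : 0 < 2 * c * (σ - a ^ 2 / 2) + (a + k) ^ 2 := by
    have : 0 ≤ 2 * c * (σ - a ^ 2 / 2) := mul_nonneg (by positivity) (sub_nonneg.mpr h)
    positivity
  have := (((((hasDerivAt_id' σ).sub_const (a ^ 2 / 2)).const_mul (2 * c)).add_const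
    ((a + k) ^ 2)).sqrt hpos.ne').const_add (-k)
  refine (this : HasDerivAt (profileTail a c k) _ σ).congr_deriv ?_
  rw [profileTail, neg_add_cancel_comm]
  field_simp

lemma hasDerivAt_profile_of_lt (h0 : 0 < σ) (h : σ < a ^ 2 / 2) :
    HasDerivAt (profile a c k) (1 / profile a c k σ) σ := by
  rw [profile_of_lt h]
  refine (hasDerivAt_sqrt_two_mul h0).congr_of_eventuallyEq ?_
  filter_upwards [Iio_mem_nhds h] with τ hτ using profile_of_lt hτ

/-- On the tail the profile solves `λ' = c / (λ + k)`; at the junction `σ = a²/2` this is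
`c / (a c) = 1 / a`, the slope of `√(2σ)` there, which is why the pieces glue differentiably. -/
lemma hasDerivAt_profile_of_ge (ha : 0 < a) (hc : 0 < c) (hak : a + k = a * c)
    (h : a ^ 2 / 2 ≤ σ) : HasDerivAt (profile a c k) (c / (profile a c k σ + k)) σ := by
  have hak₀ : 0 < a + k := hak ▸ mul_pos ha hc
  rw [profile_of_ge h]
  have htail := hasDerivAt_profileTail hc.le hak₀ h
  rcases h.lt_or_eq with h | rfl
  · refine htail.congr_of_eventuallyEq ?_
    filter_upwards [Ioi_mem_nhds h] with τ hτ using profile_of_ge hτ.le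
  have hleft : HasDerivWithinAt (profile a c k) (c / (profileTail a c k (a ^ 2 / 2) + k))
      (Iic (a ^ 2 / 2)) (a ^ 2 / 2) := by
    have hslope : c / (profileTail a c k (a ^ 2 / 2) + k) = 1 / √(2 * (a ^ 2 / 2)) := by
      rw [profileTail_sq_div_two hak₀.le, sqrt_two_mul_sq_div_two ha.le, hak]
      field_simp
    rw [hslope]
    exact (hasDerivAt_sqrt_two_mul (by positivity)).hasDerivWithinAt.congr
      (fun τ hτ ↦ profile_of_le ha.le hak₀.le hτ) (profile_of_le ha.le hak₀.le le_rfl)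
  have hright : HasDerivWithinAt (profile a c k) (c / (profileTail a c k (a ^ 2 / 2) + k))
      (Ici (a ^ 2 / 2)) (a ^ 2 / 2) :=
    htail.hasDerivWithinAt.congr (fun τ hτ ↦ profile_of_ge hτ) (profile_of_ge le_rfl)
  simpa only [Iic_union_Ici, hasDerivWithinAt_univ] using hleft.union hright

lemma profile_mul_deriv_eq_one (ha : 0 < a) (hc : 0 < c) (hak : a + k = a * c)
    (h0 : 0 < σ) (h : σ ≤ a ^ 2 / 2) : profile a c k σ * deriv (profile a c k) σ = 1 := by
  rcases h.lt_or_eq with h | rfl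
  · rw [(hasDerivAt_profile_of_lt h0 h).deriv, profile_of_lt h, mul_one_div_cancel]
    positivity
  · rw [(hasDerivAt_profile_of_ge ha hc hak le_rfl).deriv,
      profile_sq_div_two (hak ▸ (mul_pos ha hc).le), hak]
    field_simp

/-- The Brillouin condition holds with equality on the first piece; on the tail
`λ λ' = c λ / (λ + k) ≤ 1` amounts to `(1 - c) (λ - a) ≥ 0`, since `k = a (c - 1)`. -/
lemma profile_mul_deriv_le_one (ha : 0 < a) (hc : 0 < c) (hc₁ : c ≤ 1) (hak : a + k = a * c)
    (σ : ℝ) : profile a c k σ * deriv (profile a c k) σ ≤ 1 := by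
  have hak₀ : 0 < a + k := hak ▸ mul_pos ha hc
  rcases le_or_gt σ 0 with h0 | h0
  · rw [profile_of_lt (h0.trans_lt (by positivity)), sqrt_eq_zero'.mpr (by linarith), zero_mul]
    exact zero_le_one
  rcases le_or_gt σ (a ^ 2 / 2) with h | h
  · exact (profile_mul_deriv_eq_one ha hc hak h0 h).le
  have hle := le_profile ha.le hc.le hak₀.le h.le
  rw [(hasDerivAt_profile_of_ge ha hc hak h.le).deriv, mul_div_assoc', div_le_one (by linarith)]
  nlinarith

end Profile

noncomputable def liftPrimitive (c k u : ℝ) : ℝ :=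
  u ^ 2 / 2 * log (c * u) - (u ^ 2 - k ^ 2) / 2 * log (u + k) - k * u / 2

noncomputable def dragPrimitive (c k u : ℝ) : ℝ :=
  u * log (c * u) - (u + k) * log (u + k)

section Primitive

variable {a b c k u : ℝ}

lemma hasDerivAt_liftPrimitive (hc : 0 < c) (hu : 0 < u) (huk : 0 < u + k) :
    HasDerivAt (liftPrimitive c k) (u * log (u * (c / (u + k)))) u := by
  have hcu : HasDerivAt (fun v ↦ log (c * v)) (c / (c * u)) u :=
    ((hasDerivAt_id' u).const_mul c).log (by positivity) |>.congr_deriv (by simp)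
  have huk' : HasDerivAt (fun v ↦ log (v + k)) (1 / (u + k)) u :=
    ((hasDerivAt_id' u).add_const k).log huk.ne'
  have := (((hasDerivAt_pow 2 u).div_const 2).mul hcu).sub
    ((((hasDerivAt_pow 2 u).sub_const (k ^ 2)).div_const 2).mul huk') |>.sub
    ((hasDerivAt_id' u).const_mul k |>.div_const 2)
  refine (this : HasDerivAt (liftPrimitive c k) _ u).congr_deriv ?_
  rw [log_mul hu.ne' (by positivity), log_div hc.ne' huk.ne', log_mul hc.ne' hu.ne']
  field_simp
  ring

lemma hasDerivAt_dragPrimitive (hc : 0 < c) (hu : 0 < u) (huk : 0 < u + k) :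
    HasDerivAt (dragPrimitive c k) (log (u * (c / (u + k)))) u := by
  have hcu : HasDerivAt (fun v ↦ log (c * v)) (c / (c * u)) u :=
    ((hasDerivAt_id' u).const_mul c).log (by positivity) |>.congr_deriv (by simp)
  have huk' : HasDerivAt (fun v ↦ log (v + k)) (1 / (u + k)) u :=
    ((hasDerivAt_id' u).add_const k).log huk.ne'
  have := ((hasDerivAt_id' u).mul hcu).sub (((hasDerivAt_id' u).add_const k).mul huk')
  refine (this : HasDerivAt (dragPrimitive c k) _ u).congr_deriv ?_
  rw [log_mul hu.ne' (by positivity), log_div hc.ne' huk.ne', log_mul hc.ne' hu.ne']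
  field_simp
  ring

lemma log_add_of_eq_mul (ha : 0 < a) (hc : 0 < c) (hak : a + k = a * c) :
    log (a + k) = log a + log c := by
  rw [hak, log_mul ha.ne' hc.ne']

lemma log_add_of_eq_mul_exp (hb : 0 < b) (hc : 0 < c) (hbk : b + k = b * exp 1 * c) :
    log (b + k) = log b + 1 + log c := by
  rw [hbk, log_mul (by positivity) hc.ne', log_mul hb.ne' (exp_pos 1).ne', log_exp]

lemma liftPrimitive_sub (ha : 0 < a) (hb : 0 < b) (hc : 0 < c) (hak : a + k = a * c)
    (hbk : b + k = b * exp 1 * c) :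
    liftPrimitive c k b - liftPrimitive c k a =
      -((1 / 2) * (b ^ 2 - k ^ 2 + k * (b - a) - k ^ 2 * log (b / a))) := by
  rw [liftPrimitive, liftPrimitive, log_add_of_eq_mul_exp hb hc hbk, log_add_of_eq_mul ha hc hak,
    log_mul hc.ne' hb.ne', log_mul hc.ne' ha.ne', log_div hb.ne' ha.ne']
  ring

lemma dragPrimitive_sub (ha : 0 < a) (hb : 0 < b) (hc : 0 < c) (hak : a + k = a * c)
    (hbk : b + k = b * exp 1 * c) :
    dragPrimitive c k b - dragPrimitive c k a = -(k * log (b / a) + b + k) := by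
  rw [dragPrimitive, dragPrimitive, log_add_of_eq_mul_exp hb hc hbk, log_add_of_eq_mul ha hc hak,
    log_mul hc.ne' hb.ne', log_mul hc.ne' ha.ne', log_div hb.ne' ha.ne']
  ring

end Primitive

section Integral

variable {a c k s : ℝ}

/-- Any integrand `F(λ, λ')` vanishing where `λ λ' = 1` only sees the tail `[a²/2, s]`, where
`λ' = c / (λ + k)` turns it into `g(λ) λ'`, the derivative of `G ∘ λ`. -/
lemma integral_profile_eq_sub {F : ℝ → ℝ → ℝ} {g G : ℝ → ℝ} (ha : 0 < a) (hc : 0 < c)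
    (hak : a + k = a * c) (hF : ∀ u v, u * v = 1 → F u v = 0)
    (hFg : ∀ u, a ≤ u → F u (c / (u + k)) = g u * (c / (u + k)))
    (hG : ∀ u, a ≤ u → HasDerivAt G (g u) u) (hg : ContinuousOn g (Ici a))
    (hs : a ^ 2 / 2 ≤ s) :
    ∫ σ in 0..s, F (profile a c k σ) (deriv (profile a c k) σ) = G (profile a c k s) - G a := by
  set γ := a ^ 2 / 2
  set lam := profile a c k
  have hak₀ : 0 < a + k := hak ▸ mul_pos ha hc
  have hle : ∀ σ ∈ uIcc γ s, a ≤ lam σ := fun σ hσ ↦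
    le_profile ha.le hc.le hak₀.le (uIcc_of_le hs ▸ hσ).1
  have hzero : EqOn (fun σ ↦ F (lam σ) (deriv lam σ)) (fun _ ↦ 0) (Ι 0 γ) := by
    intro σ hσ
    rw [uIoc_of_le (by positivity)] at hσ
    exact hF _ _ (profile_mul_deriv_eq_one ha hc hak hσ.1 hσ.2)
  have htail : EqOn (fun σ ↦ F (lam σ) (deriv lam σ)) (fun σ ↦ g (lam σ) * (c / (lam σ + k)))
      (uIcc γ s) := by
    intro σ hσ
    dsimp only
    rw [(hasDerivAt_profile_of_ge ha hc hak (uIcc_of_le hs ▸ hσ).1).deriv, hFg _ (hle σ hσ)]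
  have hcont : ContinuousOn (fun σ ↦ g (lam σ) * (c / (lam σ + k))) (uIcc γ s) := by
    have hlam := (continuous_profile (c := c) ha.le hak₀.le).continuousOn (s := uIcc γ s)
    exact (hg.comp hlam fun σ hσ ↦ hle σ hσ).mul
      (continuousOn_const.div (hlam.add continuousOn_const) fun σ hσ ↦ by linarith [hle σ hσ])
  have hint₀ : IntervalIntegrable (fun σ ↦ F (lam σ) (deriv lam σ)) volume 0 γ :=
    (intervalIntegrable_const (c := (0 : ℝ))).congr fun σ hσ ↦ (hzero hσ).symm
  have hint₁ : IntervalIntegrable (fun σ ↦ F (lam σ) (deriv lam σ)) volume γ s :=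
    hcont.intervalIntegrable.congr (htail.symm.mono uIoc_subset_uIcc)
  rw [← intervalIntegral.integral_add_adjacent_intervals hint₀ hint₁,
    intervalIntegral.integral_congr_ae (Filter.Eventually.of_forall fun σ hσ ↦ hzero hσ),
    intervalIntegral.integral_congr htail, intervalIntegral.integral_zero, zero_add,
    ← profile_sq_div_two (c := c) hak₀.le]
  refine intervalIntegral.integral_eq_sub_of_hasDerivAt (f := G ∘ lam) (fun σ hσ ↦ ?_)
    hcont.intervalIntegrable
  exact (hG _ (hle σ hσ)).comp σ (hasDerivAt_profile_of_ge ha hc hak (uIcc_of_le hs ▸ hσ).1)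

lemma continuousOn_log_mul_div_add (hc : 0 < c) (ha : 0 < a) (hak : 0 < a + k) :
    ContinuousOn (fun u ↦ log (u * (c / (u + k)))) (Ici a) := by
  have hpos : ∀ u ∈ Ici a, 0 < u + k := fun u hu ↦ by linarith [mem_Ici.mp hu]
  refine ContinuousOn.log ?_ fun u hu ↦ ?_
  · exact continuousOn_id.mul (continuousOn_const.div (by fun_prop) fun u hu ↦ (hpos u hu).ne')
  · have := hpos u hu
    have : 0 < u := ha.trans_le hu
    positivity

lemma integral_profile_lift (ha : 0 < a) (hc : 0 < c) (hak : a + k = a * c)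
    (hs : a ^ 2 / 2 ≤ s) :
    ∫ σ in 0..s, profile a c k σ * deriv (profile a c k) σ *
        log (profile a c k σ * deriv (profile a c k) σ) =
      liftPrimitive c k (profile a c k s) - liftPrimitive c k a := by
  have hak₀ : 0 < a + k := hak ▸ mul_pos ha hc
  refine integral_profile_eq_sub (F := fun u v ↦ u * v * log (u * v))
    (g := fun u ↦ u * log (u * (c / (u + k)))) ha hc hak
    (fun u v h ↦ by simp [h]) (fun u _ ↦ by ring) (fun u hu ↦ ?_)
    (continuousOn_id.mul (continuousOn_log_mul_div_add hc ha hak₀)) hs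
  exact hasDerivAt_liftPrimitive hc (ha.trans_le hu) (by linarith)

lemma integral_profile_drag (ha : 0 < a) (hc : 0 < c) (hak : a + k = a * c)
    (hs : a ^ 2 / 2 ≤ s) :
    ∫ σ in 0..s, deriv (profile a c k) σ * log (profile a c k σ * deriv (profile a c k) σ) =
      dragPrimitive c k (profile a c k s) - dragPrimitive c k a := by
  have hak₀ : 0 < a + k := hak ▸ mul_pos ha hc
  refine integral_profile_eq_sub (F := fun u v ↦ v * log (u * v))
    (g := fun u ↦ log (u * (c / (u + k)))) ha hc hak
    (fun u v h ↦ by simp [h]) (fun u _ ↦ mul_comm _ _) (fun u hu ↦ ?_)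
    (continuousOn_log_mul_div_add hc ha hak₀) hs
  exact hasDerivAt_dragPrimitive hc (ha.trans_le hu) (by linarith)

end Integral

noncomputable def brillouinDenom (b : ℝ) : ℝ := 2 + (exp 1 - 2) * b ^ 2 * exp 1

noncomputable def brillouinA (b : ℝ) : ℝ := (b ^ 2 * exp 1 - 2) / ((exp 1 - 1) * b)

noncomputable def brillouinC (b : ℝ) : ℝ := (2 - b ^ 2) / brillouinDenom b

noncomputable def brillouinK (b : ℝ) : ℝ :=
  -((exp 1 - 1) * b * (b ^ 2 * exp 1 - 2)) / brillouinDenom b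

section Parameters

variable {b : ℝ}

lemma bounds_of_mem_Ioo_sqrt (hb : b ∈ Ioo (√(2 / exp 1)) (√2)) :
    0 < b ∧ 2 < b ^ 2 * exp 1 ∧ b ^ 2 < 2 := by
  have hb₀ : 0 < b := (sqrt_nonneg _).trans_lt hb.1
  refine ⟨hb₀, ?_, (lt_sqrt hb₀.le).mp hb.2⟩
  rw [← div_lt_iff₀ (exp_pos 1)]
  exact (sqrt_lt' hb₀).mp hb.1

lemma exp_one_sub_one_pos : 0 < exp 1 - 1 := by linarith [exp_one_gt_two]

lemma brillouinDenom_pos (b : ℝ) : 0 < brillouinDenom b := by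
  have : 0 ≤ (exp 1 - 2) * b ^ 2 * exp 1 :=
    mul_nonneg (mul_nonneg (by linarith [exp_one_gt_two]) (sq_nonneg b)) (exp_pos 1).le
  rw [brillouinDenom]
  linarith

lemma brillouinA_pos (hb : 0 < b) (h : 2 < b ^ 2 * exp 1) : 0 < brillouinA b :=
  div_pos (by linarith) (mul_pos exp_one_sub_one_pos hb)

lemma sq_brillouinA_div_two_le_one (hb : 0 < b) (h₁ : 2 < b ^ 2 * exp 1) (h₂ : b ^ 2 < 2) :
    brillouinA b ^ 2 / 2 ≤ 1 := by
  have hA := brillouinA_pos hb h₁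
  have hAb : brillouinA b < b := by
    rw [brillouinA, div_lt_iff₀ (mul_pos exp_one_sub_one_pos hb)]
    nlinarith
  nlinarith

lemma brillouinC_pos (h : b ^ 2 < 2) : 0 < brillouinC b :=
  div_pos (by linarith) (brillouinDenom_pos b)

lemma brillouinC_le_one (b : ℝ) : brillouinC b ≤ 1 := by
  rw [brillouinC, div_le_one (brillouinDenom_pos b), brillouinDenom]
  nlinarith [exp_one_gt_two, sq_nonneg b, mul_nonneg (mul_nonneg
    (sub_nonneg.2 exp_one_gt_two.le) (sq_nonneg b)) (exp_pos 1).le]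

lemma brillouinA_add_brillouinK (hb : b ≠ 0) :
    brillouinA b + brillouinK b = brillouinA b * brillouinC b := by
  have := (brillouinDenom_pos b).ne'
  have := exp_one_sub_one_pos.ne'
  rw [brillouinA, brillouinK, brillouinC]
  field_simp
  rw [brillouinDenom]
  ring

lemma add_brillouinK (b : ℝ) : b + brillouinK b = b * exp 1 * brillouinC b := by
  have := (brillouinDenom_pos b).ne'
  rw [brillouinK, brillouinC]
  field_simp
  rw [brillouinDenom]
  ring

lemma sq_add_brillouinK (hb : b ≠ 0) :
    (b + brillouinK b) ^ 2 =
      2 * brillouinC b * (1 - brillouinA b ^ 2 / 2) + (brillouinA b + brillouinK b) ^ 2 := by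
  have := (brillouinDenom_pos b).ne'
  have := exp_one_sub_one_pos.ne'
  rw [brillouinA, brillouinK, brillouinC]
  field_simp
  rw [brillouinDenom]
  ring

end Parameters

/-- Theorem 1, part 1 (attainment): for `b ∈ (√(2/e), √2)` the piecewise
function `λ(σ) = √(2σ)` for `σ < γ` and `λ(σ) = -k + √(2c(σ-γ) + (a+k)²)`
for `σ ≥ γ` is continuous, admissible, and satisfies `I[λ] = q(b)` and
`J[λ] = J_min(b)`. -/
theorem piecewise_minimizer_admissible_and_values
    (b : ℝ) (hb : b ∈ Set.Ioo (Real.sqrt (2 / Real.exp 1)) (Real.sqrt 2))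
    (k a c γ : ℝ)
    (hk : k = -((Real.exp 1 - 1) * b * (b ^ 2 * Real.exp 1 - 2)) /
      (2 + (Real.exp 1 - 2) * b ^ 2 * Real.exp 1))
    (ha : a = (b ^ 2 * Real.exp 1 - 2) / ((Real.exp 1 - 1) * b))
    (hc : c = (2 - b ^ 2) / (2 + (Real.exp 1 - 2) * b ^ 2 * Real.exp 1))
    (hγ : γ = a ^ 2 / 2)
    (lam : ℝ → ℝ)
    (hlam : ∀ σ, lam σ = if σ < γ then Real.sqrt (2 * σ)
      else -k + Real.sqrt (2 * c * (σ - γ) + (a + k) ^ 2)) :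
    ContinuousOn lam (Set.Icc (0:ℝ) 1) ∧
    lam 0 = 0 ∧
    (∀ σ ∈ Set.Icc (0:ℝ) 1, 0 ≤ deriv lam σ ∧ lam σ * deriv lam σ ≤ 1) ∧
    lamLift lam =
      (1 / 2) * (b ^ 2 - k ^ 2 + k * (b - a) - k ^ 2 * Real.log (b / a)) ∧
    lamDrag lam = Real.sqrt 2 * (k * Real.log (b / a) + b + k) := by
  obtain ⟨hb₀, hb₁, hb₂⟩ := bounds_of_mem_Ioo_sqrt hb
  obtain rfl : k = brillouinK b := hk
  obtain rfl : a = brillouinA b := ha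
  obtain rfl : c = brillouinC b := hc
  obtain rfl : lam = profile (brillouinA b) (brillouinC b) (brillouinK b) :=
    funext fun σ ↦ by rw [hlam, hγ]; rfl
  have hA := brillouinA_pos hb₀ hb₁
  have hC := brillouinC_pos hb₂
  have hAK := brillouinA_add_brillouinK hb₀.ne'
  have hAK₀ : 0 ≤ brillouinA b + brillouinK b := hAK ▸ (mul_pos hA hC).le
  have hBK := add_brillouinK b
  have hs := sq_brillouinA_div_two_le_one hb₀ hb₁ hb₂
  have hend : profile (brillouinA b) (brillouinC b) (brillouinK b) 1 = b := by
    rw [profile_of_ge hs]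
    exact profileTail_eq_of_sq_eq (hBK ▸ by positivity) (sq_add_brillouinK hb₀.ne').symm
  refine ⟨(continuous_profile hA.le hAK₀).continuousOn, profile_zero hA, fun σ _ ↦
    ⟨(monotone_profile hA.le hC.le hAK₀).deriv_nonneg,
      profile_mul_deriv_le_one hA hC (brillouinC_le_one b) hAK σ⟩, ?_, ?_⟩
  · rw [lamLift, integral_profile_lift hA hC hAK hs, hend,
      liftPrimitive_sub hA hb₀ hC hAK hBK, neg_neg]
  · rw [lamDrag, integral_profile_drag hA hC hAK hs, hend,
      dragPrimitive_sub hA hb₀ hC hAK hBK]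
    ring
end

section
/- (Theorem 1, part 2 — attainment at q = q*.) The linear function λ(σ) = σ/√e is admissible on [0,1] (λ(0) = 0, λ'(σ) = 1/√e ≥ 0, λ(σ)λ'(σ) = σ/e ≤ 1), and its functional values are I[λ] = 3/(4e) and J[λ] = 2√2/√e. -/
open MeasureTheory Real

/-!
For a linear profile `λ(σ) = aσ` one has `λλ' = a²σ`, so both functionals reduce to the
elementary integrals `∫₀¹ log σ = -1` and `∫₀¹ σ log σ = -1/4`; at `a = 1/√e` the factor
`log a² = -1` produces the stated values.
-/

open intervalIntegral

theorem integral_mul_log_from_zero {b : ℝ} (hb : 0 ≤ b) :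
    ∫ x in (0:ℝ)..b, x * log x = b ^ 2 / 2 * log b - b ^ 2 / 4 := by
  have hcont : Continuous fun x : ℝ => x / 2 * (x * log x) - x ^ 2 / 4 := by
    fun_prop
  have hderiv : ∀ x ∈ Set.Ioo (0:ℝ) b,
      HasDerivAt (fun x : ℝ => x / 2 * (x * log x) - x ^ 2 / 4) (x * log x) x := by
    intro x hx
    refine ((((hasDerivAt_id' x).div_const 2).mul (hasDerivAt_mul_log hx.1.ne')).sub
      ((hasDerivAt_pow 2 x).div_const 4)).congr_deriv ?_
    norm_num
    ring
  rw [integral_eq_sub_of_hasDerivAt_of_le hb hcont.continuousOn hderiv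
    (continuous_mul_log.intervalIntegrable 0 b)]
  ring

theorem integral_negMulLog_zero_one : ∫ x in (0:ℝ)..1, negMulLog x = 1 / 4 := by
  simp only [negMulLog, neg_mul, intervalIntegral.integral_neg,
    integral_mul_log_from_zero zero_le_one]
  norm_num

theorem lamLift_const_mul_id (a : ℝ) :
    lamLift (fun σ => a * σ) = negMulLog (a ^ 2) / 2 + a ^ 2 / 4 := by
  have hintegrand : ∀ σ : ℝ, a * σ * a * log (a * σ * a) =
      -(σ * negMulLog (a ^ 2) + a ^ 2 * negMulLog σ) := by
    intro σ
    rw [← negMulLog_mul, negMulLog]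
    ring_nf
  simp only [lamLift, deriv_const_mul_id', hintegrand, intervalIntegral.integral_neg, neg_neg]
  rw [intervalIntegral.integral_add (intervalIntegrable_id.mul_const _)
      ((continuous_negMulLog.intervalIntegrable 0 1).const_mul _),
    intervalIntegral.integral_mul_const, intervalIntegral.integral_const_mul,
    integral_id, integral_negMulLog_zero_one]
  ring

theorem lamDrag_const_mul_id {a : ℝ} (ha : a ≠ 0) :
    lamDrag (fun σ => a * σ) = -√2 * a * (log (a ^ 2) - 1) := by
  have hintegrand : ∀ σ ∈ Set.uIoc (0:ℝ) 1,
      a * log (a * σ * a) = a * log (a ^ 2) + a * log σ := by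
    intro σ hσ
    rw [Set.uIoc_of_le zero_le_one] at hσ
    rw [show a * σ * a = a ^ 2 * σ by ring, log_mul (by positivity) hσ.1.ne']
    ring
  simp only [lamDrag, deriv_const_mul_id']
  rw [integral_congr_ae (ae_of_all _ hintegrand),
    intervalIntegral.integral_add intervalIntegrable_const (intervalIntegrable_log'.const_mul a),
    intervalIntegral.integral_const, intervalIntegral.integral_const_mul, integral_log]
  norm_num
  ring

/-- Theorem 1, part 2 (attainment at `q = q*`): the function `λ(σ) = σ/√e`
is admissible (`λ(0) = 0`, `λ' = 1/√e ≥ 0`, `λλ' = σ/e ≤ 1` on `[0,1]`) and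
satisfies `I[λ] = 3/(4e)`, `J[λ] = 2√2/√e`. -/
theorem maximizer_q_star
    (lam : ℝ → ℝ) (hlam : ∀ σ, lam σ = σ / Real.sqrt (Real.exp 1)) :
    lam 0 = 0 ∧
    (∀ σ ∈ Set.Icc (0:ℝ) 1,
      deriv lam σ = 1 / Real.sqrt (Real.exp 1) ∧
      0 ≤ deriv lam σ ∧
      lam σ * deriv lam σ = σ / Real.exp 1 ∧
      lam σ * deriv lam σ ≤ 1) ∧
    lamLift lam = 3 / (4 * Real.exp 1) ∧
    lamDrag lam = 2 * Real.sqrt 2 / Real.sqrt (Real.exp 1) := by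
  set a := (√(exp 1))⁻¹ with ha
  have ha_sq : a ^ 2 = (exp 1)⁻¹ := by rw [ha, inv_pow, sq_sqrt (exp_pos 1).le]
  have hlog : log (a ^ 2) = -1 := by rw [ha_sq, log_inv, log_exp]
  obtain rfl : lam = fun σ => a * σ := funext fun σ => by rw [hlam, div_eq_inv_mul]
  have hprod (σ : ℝ) : a * σ * a = σ / exp 1 := by
    rw [div_eq_inv_mul, ← ha_sq]
    ring
  simp only [deriv_const_mul_id']
  refine ⟨mul_zero a, fun σ hσ => ⟨inv_eq_one_div _, by positivity, hprod σ, ?_⟩, ?_, ?_⟩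
  · rw [hprod, div_le_one (exp_pos 1)]
    exact hσ.2.trans (one_le_exp zero_le_one)
  · rw [lamLift_const_mul_id, negMulLog, hlog, ha_sq]
    ring
  · rw [lamDrag_const_mul_id (by positivity), hlog]
    ring
end

section
/- (Theorem 1, part 2 — attainment for large q.) Fix b ∈ (1/√e, √(2/e)) and set k = K₁(b) = -b(b²e - 2)/(2(b²e - 1)) and c = b²/(2(b²e - 1)). Then the function λ(σ) = -k + √(2cσ + k²) is admissible on [0,1] (λ(0) = 0, λ'(σ) ≥ 0, λ(σ)λ'(σ) ≤ 1), and its functional values are I[λ] = q₁(b) = (1/2)[b² + k·b - k² log((b+k)/k)] and J[λ] = J_max(b) = √2 (k log((b+k)/k) + b). -/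
open MeasureTheory Real

open Set

/-!
With `s(σ) = √(2cσ + k²)` one has `s' = c / s`, so `λ = s - k` gives `λλ' = c (s - k) / s`, which
increases in `s`. Since `s(1) = b + k` and `c b e = b + k`, its maximum on `[0,1]` is `1 / e`:
the Brillouin condition holds. Both integrands are then derivatives of explicit functions of `s`,
namely primitives of `log (c (u - k) / u)` and `(u - k) log (c (u - k) / u)` composed with `s`.
They are nonpositive, which makes them integrable even though `λ' log (λλ')` is unbounded at
`σ = 0`, so the fundamental theorem of calculus evaluates `I` and `J` between `s = k` and
`s = b + k`.
-/

theorem intervalIntegral.integral_eq_sub_of_hasDerivAt_of_nonpos {f F : ℝ → ℝ} {a b : ℝ}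
    (hab : a ≤ b) (hcont : ContinuousOn F (Icc a b))
    (hderiv : ∀ x ∈ Ioo a b, HasDerivAt F (f x) x) (hf : ∀ x ∈ Ioo a b, f x ≤ 0) :
    ∫ x in a..b, f x = F b - F a := by
  refine integral_eq_sub_of_hasDerivAt_of_le hab hcont hderiv ?_
  have hneg : IntervalIntegrable (-f) volume a b := by
    refine intervalIntegrable_deriv_of_nonneg (g := -F) ?_ ?_ ?_
    · simpa [uIcc_of_le hab] using hcont.neg
    · simpa [hab] using fun x hx => (hderiv x hx).neg
    · simpa [hab] using hf
  simpa using hneg.neg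

section Primitives

variable {k L u : ℝ}

/- Primitives of `log (c (u - k) / u)` and of `(u - k) log (c (u - k) / u)` for `L = log c`,
written with `x * log x` terms so that they stay continuous at `u = k`. -/
noncomputable def logRatioPrimitive (k L u : ℝ) : ℝ :=
  u * L + (u - k) * log (u - k) - u * log u

noncomputable def weightedLogRatioPrimitive (k L u : ℝ) : ℝ :=
  (u - k) ^ 2 / 2 * L + (u - k) / 2 * ((u - k) * log (u - k)) - (u - k) ^ 2 / 4
    - u / 2 * (u * log u) + u ^ 2 / 4 + k * (u * log u - u)

theorem continuous_logRatioPrimitive : Continuous (logRatioPrimitive k L) := by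
  unfold logRatioPrimitive; fun_prop

theorem continuous_weightedLogRatioPrimitive : Continuous (weightedLogRatioPrimitive k L) := by
  unfold weightedLogRatioPrimitive; fun_prop

theorem hasDerivAt_logRatioPrimitive (hu : u ≠ 0) (huk : u - k ≠ 0) :
    HasDerivAt (logRatioPrimitive k L) (L + log (u - k) - log u) u := by
  have hshift : HasDerivAt (fun y => (y - k) * log (y - k)) (log (u - k) + 1) u := by
    simpa [Function.comp_def] using (hasDerivAt_mul_log huk).comp u ((hasDerivAt_id u).sub_const k)
  exact (((hasDerivAt_mul_const L).add hshift).sub (hasDerivAt_mul_log hu)).congr_deriv (by ring)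

theorem hasDerivAt_weightedLogRatioPrimitive (hu : u ≠ 0) (huk : u - k ≠ 0) :
    HasDerivAt (weightedLogRatioPrimitive k L) ((u - k) * (L + log (u - k) - log u)) u := by
  have hlin : HasDerivAt (fun y => y - k) 1 u := (hasDerivAt_id u).sub_const k
  have hshift : HasDerivAt (fun y => (y - k) * log (y - k)) (log (u - k) + 1) u := by
    simpa [Function.comp_def] using (hasDerivAt_mul_log huk).comp u hlin
  have hsq : HasDerivAt (fun y => (y - k) ^ 2) (2 * (u - k)) u := by
    simpa using hlin.fun_pow 2
  have hsq' : HasDerivAt (fun y => y ^ 2) (2 * u) u := by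
    simpa using hasDerivAt_pow 2 u
  have hmulLog := hasDerivAt_mul_log hu
  refine (((((((hsq.div_const 2).mul_const L).add ((hlin.div_const 2).mul hshift)).sub
    (hsq.div_const 4)).sub (((hasDerivAt_id' u).div_const 2).mul hmulLog)).add
    (hsq'.div_const 4)).add ((hmulLog.sub (hasDerivAt_id' u)).const_mul k)).congr_deriv ?_
  ring

end Primitives

noncomputable def sqrtProfile (k c σ : ℝ) : ℝ := -k + √(2 * c * σ + k ^ 2)

section SqrtProfile

variable {k c σ : ℝ}

theorem sqrtProfile_zero (hk : 0 ≤ k) : sqrtProfile k c 0 = 0 := by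
  simp [sqrtProfile, sqrt_sq hk]

theorem hasDerivAt_sqrt_two_mul_add_sq (hσ : 0 < 2 * c * σ + k ^ 2) :
    HasDerivAt (fun x => √(2 * c * x + k ^ 2)) (c / √(2 * c * σ + k ^ 2)) σ := by
  have hlin : HasDerivAt (fun x => 2 * c * x + k ^ 2) (2 * c) σ := by
    simpa using ((hasDerivAt_id σ).const_mul (2 * c)).add_const (k ^ 2)
  refine (hlin.sqrt hσ.ne').congr_deriv ?_
  field_simp

theorem hasDerivAt_sqrtProfile (hσ : 0 < 2 * c * σ + k ^ 2) :
    HasDerivAt (sqrtProfile k c) (c / √(2 * c * σ + k ^ 2)) σ :=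
  (hasDerivAt_sqrt_two_mul_add_sq hσ).const_add (-k)

theorem le_sqrt_two_mul_add_sq (hc : 0 ≤ c) (hσ : 0 ≤ σ) : k ≤ √(2 * c * σ + k ^ 2) :=
  le_sqrt_of_sq_le (by nlinarith)

theorem lt_sqrt_two_mul_add_sq (hc : 0 < c) (hσ : 0 < σ) : k < √(2 * c * σ + k ^ 2) :=
  lt_sqrt_of_sq_lt (by nlinarith)

theorem deriv_sqrtProfile (hk : k ≠ 0) (hc : 0 ≤ c) (hσ : 0 ≤ σ) :
    deriv (sqrtProfile k c) σ = c / √(2 * c * σ + k ^ 2) :=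
  (hasDerivAt_sqrtProfile (by positivity)).deriv

theorem sqrtProfile_mul_deriv (hk : k ≠ 0) (hc : 0 ≤ c) (hσ : 0 ≤ σ) :
    sqrtProfile k c σ * deriv (sqrtProfile k c) σ
      = c * (√(2 * c * σ + k ^ 2) - k) / √(2 * c * σ + k ^ 2) := by
  rw [deriv_sqrtProfile hk hc hσ, sqrtProfile]
  ring

theorem deriv_sqrtProfile_nonneg (hk : k ≠ 0) (hc : 0 ≤ c) (hσ : 0 ≤ σ) :
    0 ≤ deriv (sqrtProfile k c) σ := by
  rw [deriv_sqrtProfile hk hc hσ]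
  positivity

theorem sqrtProfile_mul_deriv_nonneg (hk : k ≠ 0) (hc : 0 ≤ c) (hσ : 0 ≤ σ) :
    0 ≤ sqrtProfile k c σ * deriv (sqrtProfile k c) σ := by
  rw [sqrtProfile_mul_deriv hk hc hσ]
  exact div_nonneg (mul_nonneg hc (sub_nonneg.2 (le_sqrt_two_mul_add_sq hc hσ))) (sqrt_nonneg _)

theorem log_sqrtProfile_mul_deriv (hk : 0 < k) (hc : 0 < c) (hσ : 0 < σ) :
    log (sqrtProfile k c σ * deriv (sqrtProfile k c) σ)
      = log c + log (√(2 * c * σ + k ^ 2) - k) - log √(2 * c * σ + k ^ 2) := by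
  have hks := lt_sqrt_two_mul_add_sq (k := k) hc hσ
  have hsk : 0 < √(2 * c * σ + k ^ 2) - k := sub_pos.2 hks
  rw [sqrtProfile_mul_deriv hk.ne' hc.le hσ.le, log_div (mul_pos hc hsk).ne' (hk.trans hks).ne',
    log_mul hc.ne' hsk.ne']

theorem sqrtProfile_mul_deriv_le (hk : 0 < k) (hc : 0 < c) (hσ : σ ∈ Icc (0 : ℝ) 1) :
    sqrtProfile k c σ * deriv (sqrtProfile k c) σ
      ≤ c * (√(2 * c + k ^ 2) - k) / √(2 * c + k ^ 2) := by
  have hks := le_sqrt_two_mul_add_sq (k := k) hc.le hσ.1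
  have hmono : √(2 * c * σ + k ^ 2) ≤ √(2 * c + k ^ 2) := sqrt_le_sqrt (by nlinarith [hσ.2])
  have hs : 0 < √(2 * c * σ + k ^ 2) := hk.trans_le hks
  rw [sqrtProfile_mul_deriv hk.ne' hc.le hσ.1, div_le_div_iff₀ hs (hs.trans_le hmono)]
  nlinarith [mul_nonneg (mul_nonneg hc.le hk.le) (sub_nonneg.2 hmono)]

theorem integral_eq_sub_of_hasDerivAt_comp_sqrt {f P P' : ℝ → ℝ} (hk : 0 ≤ k) (hc : 0 < c)
    (hP : Continuous P) (hderiv : ∀ u, k < u → HasDerivAt P (P' u) u)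
    (hf : ∀ σ ∈ Ioo (0 : ℝ) 1,
      f σ = P' √(2 * c * σ + k ^ 2) * (c / √(2 * c * σ + k ^ 2)))
    (hnonpos : ∀ σ ∈ Ioo (0 : ℝ) 1, f σ ≤ 0) :
    ∫ σ in (0 : ℝ)..1, f σ = P √(2 * c + k ^ 2) - P k := by
  have hcont : ContinuousOn (fun σ => P √(2 * c * σ + k ^ 2)) (Icc 0 1) := by fun_prop
  rw [intervalIntegral.integral_eq_sub_of_hasDerivAt_of_nonpos zero_le_one hcont ?_ hnonpos]
  · simp [sqrt_sq hk]
  · intro σ hσ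
    rw [hf σ hσ]
    exact (hderiv _ (lt_sqrt_two_mul_add_sq hc hσ.1)).comp σ
      (hasDerivAt_sqrt_two_mul_add_sq (by nlinarith [hσ.1]))

theorem integral_deriv_mul_log_sqrtProfile (hk : 0 < k) (hc : 0 < c)
    (hbrill : ∀ σ ∈ Icc (0 : ℝ) 1, sqrtProfile k c σ * deriv (sqrtProfile k c) σ ≤ 1) :
    ∫ σ in (0 : ℝ)..1, deriv (sqrtProfile k c) σ
        * log (sqrtProfile k c σ * deriv (sqrtProfile k c) σ)
      = logRatioPrimitive k (log c) √(2 * c + k ^ 2) - logRatioPrimitive k (log c) k := by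
  refine integral_eq_sub_of_hasDerivAt_comp_sqrt hk.le hc continuous_logRatioPrimitive
    (fun u hu => hasDerivAt_logRatioPrimitive (hk.trans hu).ne' (sub_pos.2 hu).ne')
    (fun σ hσ => ?_) (fun σ hσ => ?_)
  · rw [log_sqrtProfile_mul_deriv hk hc hσ.1, deriv_sqrtProfile hk.ne' hc.le hσ.1.le]
    ring
  · exact mul_nonpos_of_nonneg_of_nonpos (deriv_sqrtProfile_nonneg hk.ne' hc.le hσ.1.le)
      (log_nonpos (sqrtProfile_mul_deriv_nonneg hk.ne' hc.le hσ.1.le)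
        (hbrill σ (Ioo_subset_Icc_self hσ)))

theorem integral_mul_deriv_mul_log_sqrtProfile (hk : 0 < k) (hc : 0 < c)
    (hbrill : ∀ σ ∈ Icc (0 : ℝ) 1, sqrtProfile k c σ * deriv (sqrtProfile k c) σ ≤ 1) :
    ∫ σ in (0 : ℝ)..1, sqrtProfile k c σ * deriv (sqrtProfile k c) σ
        * log (sqrtProfile k c σ * deriv (sqrtProfile k c) σ)
      = weightedLogRatioPrimitive k (log c) √(2 * c + k ^ 2)
        - weightedLogRatioPrimitive k (log c) k := by
  refine integral_eq_sub_of_hasDerivAt_comp_sqrt hk.le hc continuous_weightedLogRatioPrimitive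
    (fun u hu => hasDerivAt_weightedLogRatioPrimitive (hk.trans hu).ne' (sub_pos.2 hu).ne')
    (fun σ hσ => ?_) (fun σ hσ => ?_)
  · rw [log_sqrtProfile_mul_deriv hk hc hσ.1, sqrtProfile_mul_deriv hk.ne' hc.le hσ.1.le]
    field_simp
  · have hnonneg := sqrtProfile_mul_deriv_nonneg hk.ne' hc.le hσ.1.le
    exact mul_nonpos_of_nonneg_of_nonpos hnonneg
      (log_nonpos hnonneg (hbrill σ (Ioo_subset_Icc_self hσ)))

end SqrtProfile

theorem pos_and_sq_mul_exp_mem_Ioo {b : ℝ}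
    (hb : b ∈ Ioo (1 / √(exp 1)) (√(2 / exp 1))) :
    0 < b ∧ b ^ 2 * exp 1 ∈ Ioo 1 2 := by
  obtain ⟨hlow, hhigh⟩ := hb
  have hb : 0 < b := lt_trans (by positivity) hlow
  refine ⟨hb, ?_, ?_⟩
  · rw [div_lt_iff₀ (by positivity)] at hlow
    nlinarith [sq_sqrt (exp_pos 1).le]
  · rw [lt_sqrt hb.le, lt_div_iff₀ (exp_pos 1)] at hhigh
    exact hhigh

theorem maximizer_params {b k c : ℝ} (hb : b ∈ Ioo (1 / √(exp 1)) (√(2 / exp 1)))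
    (hk : k = -(b * (b ^ 2 * exp 1 - 2)) / (2 * (b ^ 2 * exp 1 - 1)))
    (hc : c = b ^ 2 / (2 * (b ^ 2 * exp 1 - 1))) :
    0 < b ∧ 0 < k ∧ 0 < c ∧ 2 * c + k ^ 2 = (b + k) ^ 2 ∧ c * (b * exp 1) = b + k := by
  obtain ⟨hb0, hlow, hhigh⟩ := pos_and_sq_mul_exp_mem_Ioo hb
  have hD : b ^ 2 * exp 1 - 1 ≠ 0 := by linarith
  refine ⟨hb0, ?_, ?_, ?_, ?_⟩
  · rw [hk]; exact div_pos (by nlinarith) (by linarith)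
  · rw [hc]; exact div_pos (by positivity) (by linarith)
  · rw [hk, hc]; field_simp; ring
  · rw [hk, hc]; field_simp; ring

/-- Theorem 1, part 2 (attainment for large `q`): for `b ∈ (1/√e, √(2/e))`,
with `k = K₁(b)` and `c` as in the paper, the function
`λ(σ) = -k + √(2cσ + k²)` is admissible and satisfies `I[λ] = q₁(b)`,
`J[λ] = J_max(b)`. -/
theorem maximizer_large_q
    (b : ℝ)
    (hb : b ∈ Set.Ioo (1 / Real.sqrt (Real.exp 1)) (Real.sqrt (2 / Real.exp 1)))
    (k c : ℝ)
    (hk : k = -(b * (b ^ 2 * Real.exp 1 - 2)) / (2 * (b ^ 2 * Real.exp 1 - 1)))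
    (hc : c = b ^ 2 / (2 * (b ^ 2 * Real.exp 1 - 1)))
    (lam : ℝ → ℝ)
    (hlam : ∀ σ, lam σ = -k + Real.sqrt (2 * c * σ + k ^ 2)) :
    lam 0 = 0 ∧
    (∀ σ ∈ Set.Icc (0:ℝ) 1, 0 ≤ deriv lam σ ∧ lam σ * deriv lam σ ≤ 1) ∧
    lamLift lam = (1 / 2) * (b ^ 2 + k * b - k ^ 2 * Real.log ((b + k) / k)) ∧
    lamDrag lam = Real.sqrt 2 * (k * Real.log ((b + k) / k) + b) := by
  obtain ⟨hb0, hk0, hc0, hsq, hce⟩ := maximizer_params hb hk hc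
  have hbk : 0 < b + k := by linarith
  have hend : √(2 * c + k ^ 2) = b + k := by rw [hsq, sqrt_sq hbk.le]
  have hlogc : log c = log (b + k) - log b - 1 := by
    rw [eq_div_of_mul_eq (by positivity) hce, log_div hbk.ne' (by positivity),
      log_mul hb0.ne' (exp_pos 1).ne', log_exp]
    ring
  obtain rfl : lam = sqrtProfile k c := funext hlam
  have hbrill : ∀ σ ∈ Icc (0 : ℝ) 1,
      0 ≤ deriv (sqrtProfile k c) σ ∧ sqrtProfile k c σ * deriv (sqrtProfile k c) σ ≤ 1 := by
    refine fun σ hσ => ⟨deriv_sqrtProfile_nonneg hk0.ne' hc0.le hσ.1,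
      (sqrtProfile_mul_deriv_le hk0 hc0 hσ).trans ?_⟩
    rw [hend, add_sub_cancel_right, div_le_one hbk]
    nlinarith [add_one_le_exp 1]
  have hmul_deriv_le := fun σ hσ => (hbrill σ hσ).2
  refine ⟨sqrtProfile_zero hk0.le, hbrill, ?_, ?_⟩
  · rw [lamLift, integral_mul_deriv_mul_log_sqrtProfile hk0 hc0 hmul_deriv_le, hend]
    simp only [weightedLogRatioPrimitive, hlogc, add_sub_cancel_right, sub_self, log_zero]
    rw [log_div hbk.ne' hk0.ne']
    ring
  · rw [lamDrag, integral_deriv_mul_log_sqrtProfile hk0 hc0 hmul_deriv_le, hend]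
    simp only [logRatioPrimitive, hlogc, add_sub_cancel_right, sub_self, log_zero]
    rw [log_div hbk.ne' hk0.ne']
    ring
end

section
/- (Theorem 2, maximum lift.) For every ε ∈ [0,1) and all measurable functions u₁, u₂ : [0,1] → ℝ satisfying the Brillouin condition 0 ≤ uᵢ(σ) ≤ 1, the lift coefficient C_L = 2{(1-ε) I[u₂] - ε I[u₁]} satisfies C_L ≤ 2/e; moreover, C_L = 2/e if and only if ε = 0 (or ε I[u₁] = 0) and u₂(σ) = 1/e for almost every σ ∈ [0,1]. -/
open MeasureTheory Real

/-- The lift functional `I[u] = -∫₀¹ u(σ) log u(σ) dσ`. -/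
noncomputable def liftFunctional (u : ℝ → ℝ) : ℝ :=
  -∫ σ in (0:ℝ)..1, u σ * Real.log (u σ)

/-!
The integrand of `I[u]` is `negMulLog u = -u log u`, which on `[0, ∞)` attains its maximum `1/e`
only at `u = 1/e`. Hence `I[u₂] ≤ 1/e`, with equality iff `u₂ = 1/e` almost everywhere, while
`I[u₁] ≥ 0` because `u₁ ≤ 1`. So `(1 - ε) I[u₂] - ε I[u₁] ≤ (1 - ε)/e ≤ 1/e`, and equality in the
last step forces `ε = 0`.
-/

namespace Real

lemma negMulLog_exp_neg_one : negMulLog (exp (-1)) = exp (-1) := by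
  simp [negMulLog]

lemma negMulLog_lt_exp_neg_one {x : ℝ} (hx : 0 ≤ x) (hne : x ≠ exp (-1)) :
    negMulLog x < exp (-1) := by
  -- `negMulLog_lt_one_sub_self` at `e x`, since `negMulLog (e x) = e negMulLog x - e x`.
  have hscale : negMulLog (exp 1 * x) = exp 1 * negMulLog x - exp 1 * x := by
    rw [negMulLog_mul, negMulLog, log_exp]
    ring
  have hex : exp 1 * x ≠ 1 := by
    rwa [Ne, ← eq_inv_mul_iff_mul_eq₀ (exp_ne_zero 1), mul_one, ← exp_neg]
  have h := negMulLog_lt_one_sub_self (by positivity) hex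
  rw [hscale] at h
  rw [exp_neg, ← mul_lt_mul_iff_right₀ (exp_pos 1), mul_inv_cancel₀ (exp_ne_zero 1)]
  linarith

lemma negMulLog_le_exp_neg_one {x : ℝ} (hx : 0 ≤ x) : negMulLog x ≤ exp (-1) := by
  rcases eq_or_ne x (exp (-1)) with rfl | hne
  · exact negMulLog_exp_neg_one.le
  · exact (negMulLog_lt_exp_neg_one hx hne).le

end Real

section Entropy

variable {α : Type*} [MeasurableSpace α] {μ : Measure α} [IsProbabilityMeasure μ] {u : α → ℝ}

lemma integral_negMulLog_le_exp_neg_one (hu : 0 ≤ᵐ[μ] u) :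
    ∫ a, negMulLog (u a) ∂μ ≤ exp (-1) := by
  by_cases hint : Integrable (fun a => negMulLog (u a)) μ
  · calc ∫ a, negMulLog (u a) ∂μ ≤ ∫ _, exp (-1) ∂μ :=
          integral_mono_ae hint (integrable_const _) (hu.mono fun _ => negMulLog_le_exp_neg_one)
      _ = exp (-1) := by simp
  · rw [integral_undef hint]
    positivity

lemma integral_negMulLog_eq_exp_neg_one_iff (hu : 0 ≤ᵐ[μ] u) :
    ∫ a, negMulLog (u a) ∂μ = exp (-1) ↔ ∀ᵐ a ∂μ, u a = exp (-1) := by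
  constructor
  · intro h
    have hint : Integrable (fun a => negMulLog (u a)) μ := by
      by_contra hint
      rw [integral_undef hint] at h
      exact (exp_pos _).ne h
    have hgap_int : Integrable (fun a => exp (-1) - negMulLog (u a)) μ :=
      (integrable_const _).sub hint
    have hgap_nonneg : 0 ≤ᵐ[μ] fun a => exp (-1) - negMulLog (u a) :=
      hu.mono fun _ ha => sub_nonneg.2 (negMulLog_le_exp_neg_one ha)
    have hgap_zero : ∫ a, (exp (-1) - negMulLog (u a)) ∂μ = 0 := by
      simp [integral_sub (integrable_const _) hint, h]
    filter_upwards [(integral_eq_zero_iff_of_nonneg_ae hgap_nonneg hgap_int).1 hgap_zero, hu]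
      with a hgap ha
    by_contra hne
    exact (sub_pos.2 (negMulLog_lt_exp_neg_one ha hne)).ne' hgap
  · intro h
    rw [integral_congr_ae (h.mono fun _ ha => congrArg negMulLog ha)]
    simp [negMulLog_exp_neg_one]

end Entropy

instance : IsProbabilityMeasure (volume.restrict (Set.Icc (0:ℝ) 1)) :=
  ⟨by simp⟩

lemma liftFunctional_eq_integral_negMulLog (u : ℝ → ℝ) :
    liftFunctional u = ∫ σ in Set.Icc (0:ℝ) 1, negMulLog (u σ) := by
  rw [liftFunctional, ← intervalIntegral.integral_neg, intervalIntegral.integral_of_le zero_le_one,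
    integral_Icc_eq_integral_Ioc, negMulLog_eq_neg]

lemma liftFunctional_nonneg {u : ℝ → ℝ} (hu : ∀ σ ∈ Set.Icc (0:ℝ) 1, 0 ≤ u σ ∧ u σ ≤ 1) :
    0 ≤ liftFunctional u := by
  rw [liftFunctional_eq_integral_negMulLog]
  exact setIntegral_nonneg measurableSet_Icc fun σ hσ => negMulLog_nonneg (hu σ hσ).1 (hu σ hσ).2

lemma one_sub_mul_sub_mul_le {ε a b c : ℝ} (hε₀ : 0 ≤ ε) (hε₁ : ε ≤ 1) (hac : a ≤ c)
    (hb : 0 ≤ b) (hc : 0 ≤ c) : (1 - ε) * a - ε * b ≤ c := by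
  nlinarith

lemma one_sub_mul_sub_mul_eq_iff {ε a b c : ℝ} (hε₀ : 0 ≤ ε) (hε₁ : ε ≤ 1) (hac : a ≤ c)
    (hb : 0 ≤ b) (hc : 0 < c) : (1 - ε) * a - ε * b = c ↔ ε = 0 ∧ a = c := by
  constructor
  · intro h
    have hε : ε = 0 := by nlinarith
    subst hε
    exact ⟨rfl, by linarith⟩
  · rintro ⟨rfl, rfl⟩
    ring

theorem lift_coefficient_le_two_div_exp_general
    (ε : ℝ) (hε : ε ∈ Set.Ico (0:ℝ) 1)
    (u₁ u₂ : ℝ → ℝ)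
    (hB₁ : ∀ σ ∈ Set.Icc (0:ℝ) 1, 0 ≤ u₁ σ ∧ u₁ σ ≤ 1)
    (hB₂ : ∀ σ ∈ Set.Icc (0:ℝ) 1, 0 ≤ u₂ σ ∧ u₂ σ ≤ 1) :
    2 * ((1 - ε) * liftFunctional u₂ - ε * liftFunctional u₁) ≤ 2 / Real.exp 1 ∧
    (2 * ((1 - ε) * liftFunctional u₂ - ε * liftFunctional u₁) = 2 / Real.exp 1 ↔
      ε = 0 ∧
      ∀ᵐ σ ∂(volume.restrict (Set.Icc (0:ℝ) 1)), u₂ σ = 1 / Real.exp 1) := by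
  have hu₂ : 0 ≤ᵐ[volume.restrict (Set.Icc (0:ℝ) 1)] u₂ :=
    ae_restrict_of_forall_mem measurableSet_Icc fun σ hσ => (hB₂ σ hσ).1
  have hI₁ : 0 ≤ liftFunctional u₁ := liftFunctional_nonneg hB₁
  have hI₂ : liftFunctional u₂ ≤ exp (-1) := by
    rw [liftFunctional_eq_integral_negMulLog]
    exact integral_negMulLog_le_exp_neg_one hu₂
  have hε₁ : ε ≤ 1 := hε.2.le
  rw [div_eq_mul_one_div, one_div, ← exp_neg, mul_le_mul_iff_right₀ two_pos,
    mul_right_inj' two_ne_zero, one_sub_mul_sub_mul_eq_iff hε.1 hε₁ hI₂ hI₁ (exp_pos _)]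
  refine ⟨one_sub_mul_sub_mul_le hε.1 hε₁ hI₂ hI₁ (exp_pos _).le, and_congr_right fun _ => ?_⟩
  rw [liftFunctional_eq_integral_negMulLog]
  exact integral_negMulLog_eq_exp_neg_one_iff hu₂

/-- Theorem 2 (maximum lift): for `ε ∈ [0,1)` and Brillouin-admissible
velocity distributions `u₁, u₂`, the lift coefficient
`C_L = 2{(1-ε) I[u₂] - ε I[u₁]}` satisfies `C_L ≤ 2/e`, with equality iff
`ε = 0` and `u₂ = 1/e` almost everywhere on `[0,1]`. -/
theorem lift_coefficient_le_two_div_exp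
    (ε : ℝ) (hε : ε ∈ Set.Ico (0:ℝ) 1)
    (u₁ u₂ : ℝ → ℝ) (hm₁ : Measurable u₁) (hm₂ : Measurable u₂)
    (hB₁ : ∀ σ ∈ Set.Icc (0:ℝ) 1, 0 ≤ u₁ σ ∧ u₁ σ ≤ 1)
    (hB₂ : ∀ σ ∈ Set.Icc (0:ℝ) 1, 0 ≤ u₂ σ ∧ u₂ σ ≤ 1) :
    2 * ((1 - ε) * liftFunctional u₂ - ε * liftFunctional u₁) ≤ 2 / Real.exp 1 ∧
    (2 * ((1 - ε) * liftFunctional u₂ - ε * liftFunctional u₁) = 2 / Real.exp 1 ↔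
      ε = 0 ∧
      ∀ᵐ σ ∂(volume.restrict (Set.Icc (0:ℝ) 1)), u₂ σ = 1 / Real.exp 1) :=
  lift_coefficient_le_two_div_exp_general ε hε u₁ u₂ hB₁ hB₂
end

section
/- (Endpoint of Theorem 2 at maximum lift.) If ε ∈ [0,1) and measurable u₁, u₂ : [0,1] → ℝ with 0 ≤ uᵢ(σ) ≤ 1 satisfy (1-ε) I[u₂] - ε I[u₁] = 1/e with I[u₁] ≥ 0, then necessarily ε = 0 and u₂ = 1/e a.e.; consequently the drag coefficient C_D = (1/(2π)) (√(1-ε) J[u₂] + √ε J[u₁])² equals 2/(πe) and the lift-to-drag ratio κ = C_L/C_D equals π. In other words, at the maximal lift coefficient C_L = 2/e the lift-to-drag ratio is uniquely determined and equals π. -/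
open MeasureTheory Real

/-- The drag functional `J[u] = -∫₀¹ (u log u)/√(∫₀^σ u) dσ`. -/
noncomputable def dragFunctional (u : ℝ → ℝ) : ℝ :=
  -∫ σ in (0:ℝ)..1, (u σ * Real.log (u σ)) / Real.sqrt (∫ t in (0:ℝ)..σ, u t)

lemma neg_mul_log_nonneg {x : ℝ} (h0 : 0 ≤ x) (h1 : x ≤ 1) : 0 ≤ -(x * Real.log x) := by
  have := Real.log_nonpos h0 h1
  nlinarith

lemma neg_mul_log_lt {x : ℝ} (h0 : 0 ≤ x) (hne : x ≠ 1 / Real.exp 1) :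
    -(x * Real.log x) < 1 / Real.exp 1 := by
  have he : (0:ℝ) < Real.exp 1 := Real.exp_pos 1
  rcases eq_or_lt_of_le h0 with h | h
  · simp [← h]; positivity
  · have hx1 : (0:ℝ) < 1 / (Real.exp 1 * x) := by positivity
    have hne' : 1 / (Real.exp 1 * x) ≠ 1 := by
      intro hc
      apply hne
      field_simp at hc ⊢
      linarith
    have h1 := Real.log_lt_sub_one_of_pos hx1 hne'
    rw [Real.log_div one_ne_zero (by positivity), Real.log_one,
      Real.log_mul (Real.exp_ne_zero 1) h.ne', Real.log_exp] at h1
    have h2 : -Real.log x < 1 / (Real.exp 1 * x) := by linarith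
    have h3 : x * (-Real.log x) < x * (1 / (Real.exp 1 * x)) :=
      (mul_lt_mul_iff_right₀ h).mpr h2
    have h4 : x * (1 / (Real.exp 1 * x)) = 1 / Real.exp 1 := by
      field_simp
    nlinarith

lemma neg_mul_log_le {x : ℝ} (h0 : 0 ≤ x) : -(x * Real.log x) ≤ 1 / Real.exp 1 := by
  by_cases hne : x = 1 / Real.exp 1
  · subst hne
    rw [Real.log_div one_ne_zero (Real.exp_ne_zero 1), Real.log_one, Real.log_exp]
    ring_nf
    norm_num
  · exact (neg_mul_log_lt h0 hne).le

lemma eq_of_neg_mul_log_eq {x : ℝ} (h0 : 0 ≤ x) (h : x * Real.log x = -(1 / Real.exp 1)) :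
    x = 1 / Real.exp 1 := by
  by_contra hne
  have := neg_mul_log_lt h0 hne
  rw [h] at this
  simp at this

lemma intIntegrable_mul_log {u : ℝ → ℝ} (hm : Measurable u)
    (hB : ∀ σ ∈ Set.Icc (0:ℝ) 1, 0 ≤ u σ ∧ u σ ≤ 1) :
    IntervalIntegrable (fun σ => u σ * Real.log (u σ)) volume 0 1 := by
  rw [intervalIntegrable_iff]
  constructor
  · exact (hm.mul (Real.measurable_log.comp hm)).aestronglyMeasurable
  · haveI : IsFiniteMeasure (volume.restrict (Set.uIoc (0:ℝ) 1)) := by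
      rw [Set.uIoc_of_le zero_le_one]
      exact ⟨by rw [Measure.restrict_apply_univ]; exact measure_Ioc_lt_top⟩
    apply MeasureTheory.HasFiniteIntegral.of_bounded (C := 1 / Real.exp 1)
    rw [ae_restrict_iff' measurableSet_uIoc]
    refine ae_of_all _ fun x hx => ?_
    have hx' : x ∈ Set.Icc (0:ℝ) 1 := by
      rw [Set.uIoc_of_le zero_le_one] at hx
      exact Set.Ioc_subset_Icc_self hx
    obtain ⟨h0, h1⟩ := hB x hx'
    have := neg_mul_log_nonneg h0 h1
    have := neg_mul_log_le h0
    rw [Real.norm_eq_abs, abs_le]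
    constructor <;> linarith

lemma lift_nonneg {u : ℝ → ℝ}
    (hB : ∀ σ ∈ Set.Icc (0:ℝ) 1, 0 ≤ u σ ∧ u σ ≤ 1) :
    0 ≤ liftFunctional u := by
  unfold liftFunctional
  have h : (0:ℝ) ≤ ∫ σ in (0:ℝ)..1, -(u σ * Real.log (u σ)) :=
    intervalIntegral.integral_nonneg zero_le_one fun x hx =>
      neg_mul_log_nonneg (hB x hx).1 (hB x hx).2
  rw [intervalIntegral.integral_neg] at h
  linarith

lemma lift_le {u : ℝ → ℝ} (hm : Measurable u)
    (hB : ∀ σ ∈ Set.Icc (0:ℝ) 1, 0 ≤ u σ ∧ u σ ≤ 1) :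
    liftFunctional u ≤ 1 / Real.exp 1 := by
  unfold liftFunctional
  have h2 : ∫ σ in (0:ℝ)..1, (-(1 / Real.exp 1) : ℝ) ≤
      ∫ σ in (0:ℝ)..1, u σ * Real.log (u σ) := by
    apply intervalIntegral.integral_mono_on zero_le_one intervalIntegrable_const
      (intIntegrable_mul_log hm hB)
    intro x hx
    obtain ⟨h0, _⟩ := hB x hx
    linarith [neg_mul_log_le h0]
  have h1 : ∫ σ in (0:ℝ)..1, (-(1 / Real.exp 1) : ℝ) = -(1 / Real.exp 1) := by simp
  linarith

lemma lift_eq_ae {u : ℝ → ℝ} (hm : Measurable u)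
    (hB : ∀ σ ∈ Set.Icc (0:ℝ) 1, 0 ≤ u σ ∧ u σ ≤ 1)
    (heq : liftFunctional u = 1 / Real.exp 1) :
    ∀ᵐ σ ∂(volume.restrict (Set.Icc (0:ℝ) 1)), u σ = 1 / Real.exp 1 := by
  have hint := intIntegrable_mul_log hm hB
  have hIoc : ∫ σ in Set.Ioc (0:ℝ) 1, (u σ * Real.log (u σ) + 1 / Real.exp 1) = 0 := by
    rw [MeasureTheory.integral_add
      ((intervalIntegrable_iff_integrableOn_Ioc_of_le zero_le_one).mp hint)
      (integrableOn_const measure_Ioc_lt_top.ne)]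
    have : ∫ σ in Set.Ioc (0:ℝ) 1, u σ * Real.log (u σ) = -(1 / Real.exp 1) := by
      rw [← intervalIntegral.integral_of_le zero_le_one]
      unfold liftFunctional at heq
      linarith
    rw [this]
    simp [Real.volume_Ioc]
  have hnonneg : 0 ≤ᵐ[volume.restrict (Set.Ioc (0:ℝ) 1)]
      fun σ => u σ * Real.log (u σ) + 1 / Real.exp 1 := by
    filter_upwards [self_mem_ae_restrict (μ := volume)
      (measurableSet_Ioc : MeasurableSet (Set.Ioc (0:ℝ) 1))] with x hx
    obtain ⟨h0, h1⟩ := hB x (Set.Ioc_subset_Icc_self hx)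
    have := neg_mul_log_le h0
    simp only [Pi.zero_apply]
    linarith
  have hintg : Integrable (fun σ => u σ * Real.log (u σ) + 1 / Real.exp 1)
      (volume.restrict (Set.Ioc (0:ℝ) 1)) :=
    ((intervalIntegrable_iff_integrableOn_Ioc_of_le zero_le_one).mp hint).add
      (integrableOn_const measure_Ioc_lt_top.ne)
  have hzero := (MeasureTheory.integral_eq_zero_iff_of_nonneg_ae hnonneg hintg).mp hIoc
  have hre : volume.restrict (Set.Icc (0:ℝ) 1) = volume.restrict (Set.Ioc (0:ℝ) 1) :=
    (Measure.restrict_congr_set MeasureTheory.Ioc_ae_eq_Icc).symm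
  rw [hre]
  have hmem := self_mem_ae_restrict (μ := volume)
    (measurableSet_Ioc : MeasurableSet (Set.Ioc (0:ℝ) 1))
  filter_upwards [hzero, hmem] with x hx hxm
  have h0 := (hB x (Set.Ioc_subset_Icc_self hxm)).1
  apply eq_of_neg_mul_log_eq h0
  have : u x * Real.log (u x) + 1 / Real.exp 1 = 0 := hx
  linarith

lemma drag_of_ae (u : ℝ → ℝ)
    (hae : ∀ᵐ σ ∂(volume.restrict (Set.Icc (0:ℝ) 1)), u σ = 1 / Real.exp 1) :
    dragFunctional u = 2 / Real.sqrt (Real.exp 1) := by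
  have he : (0:ℝ) < Real.exp 1 := Real.exp_pos 1
  have hse : (0:ℝ) < Real.sqrt (Real.exp 1) := Real.sqrt_pos.mpr he
  have hglob : ∀ᵐ x ∂(volume : Measure ℝ), x ∈ Set.Icc (0:ℝ) 1 → u x = 1 / Real.exp 1 :=
    (ae_restrict_iff' measurableSet_Icc).mp hae
  have hinner : ∀ σ ∈ Set.Icc (0:ℝ) 1, (∫ t in (0:ℝ)..σ, u t) = σ / Real.exp 1 := by
    intro σ hσ
    have hcg : ∫ t in (0:ℝ)..σ, u t = ∫ t in (0:ℝ)..σ, (1 / Real.exp 1 : ℝ) := by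
      apply intervalIntegral.integral_congr_ae
      filter_upwards [hglob] with x hx hxm
      apply hx
      rw [Set.uIoc_of_le hσ.1] at hxm
      exact ⟨hxm.1.le, hxm.2.trans hσ.2⟩
    rw [hcg, intervalIntegral.integral_const, smul_eq_mul]
    ring
  have hcong : ∫ σ in (0:ℝ)..1, (u σ * Real.log (u σ)) / Real.sqrt (∫ t in (0:ℝ)..σ, u t)
      = ∫ σ in (0:ℝ)..1, -(Real.sqrt (Real.exp 1))⁻¹ * σ ^ (-(1/2) : ℝ) := by
    apply intervalIntegral.integral_congr_ae
    filter_upwards [hglob] with x hx hxm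
    rw [Set.uIoc_of_le zero_le_one] at hxm
    have hx0 : 0 < x := hxm.1
    have hu : u x = 1 / Real.exp 1 := hx ⟨hx0.le, hxm.2⟩
    rw [hu, hinner x ⟨hx0.le, hxm.2⟩]
    have hsd : Real.sqrt (x / Real.exp 1) = Real.sqrt x / Real.sqrt (Real.exp 1) :=
      Real.sqrt_div hx0.le _
    have hlog : Real.log (1 / Real.exp 1) = -1 := by
      rw [Real.log_div one_ne_zero (Real.exp_ne_zero 1), Real.log_one, Real.log_exp]
      ring
    have hrp : x ^ (-(1/2) : ℝ) = (Real.sqrt x)⁻¹ := by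
      rw [Real.rpow_neg hx0.le, Real.sqrt_eq_rpow]
    have hsx : (0:ℝ) < Real.sqrt x := Real.sqrt_pos.mpr hx0
    have hee : Real.sqrt (Real.exp 1) * Real.sqrt (Real.exp 1) = Real.exp 1 :=
      Real.mul_self_sqrt he.le
    rw [hsd, hlog, hrp]
    field_simp
    nlinarith [hsx, hse]
  have hint : ∫ σ in (0:ℝ)..1, -(Real.sqrt (Real.exp 1))⁻¹ * σ ^ (-(1/2) : ℝ)
      = -(Real.sqrt (Real.exp 1))⁻¹ * 2 := by
    rw [intervalIntegral.integral_const_mul, integral_rpow (Or.inl (by norm_num))]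
    norm_num
  unfold dragFunctional
  rw [hcong, hint]
  field_simp

/-- Endpoint of Theorem 2 at maximum lift: if `ε ∈ [0,1)` and
Brillouin-admissible `u₁, u₂` satisfy `(1-ε) I[u₂] - ε I[u₁] = 1/e`, then
necessarily `ε I[u₁] = 0`, `ε = 0` and `u₂ = 1/e` a.e.; consequently the
drag coefficient `C_D = (1/(2π))(√(1-ε) J[u₂] + √ε J[u₁])²` equals `2/(πe)`
and the lift-to-drag ratio `κ = C_L/C_D` equals `π`. -/
theorem lift_to_drag_at_max_lift
    (ε : ℝ) (hε : ε ∈ Set.Ico (0:ℝ) 1)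
    (u₁ u₂ : ℝ → ℝ) (hm₁ : Measurable u₁) (hm₂ : Measurable u₂)
    (hB₁ : ∀ σ ∈ Set.Icc (0:ℝ) 1, 0 ≤ u₁ σ ∧ u₁ σ ≤ 1)
    (hB₂ : ∀ σ ∈ Set.Icc (0:ℝ) 1, 0 ≤ u₂ σ ∧ u₂ σ ≤ 1)
    (hlift : (1 - ε) * liftFunctional u₂ - ε * liftFunctional u₁ =
      1 / Real.exp 1) :
    ε * liftFunctional u₁ = 0 ∧
    ε = 0 ∧
    (∀ᵐ σ ∂(volume.restrict (Set.Icc (0:ℝ) 1)), u₂ σ = 1 / Real.exp 1) ∧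
    (1 / (2 * Real.pi)) *
        (Real.sqrt (1 - ε) * dragFunctional u₂ +
          Real.sqrt ε * dragFunctional u₁) ^ 2 =
      2 / (Real.pi * Real.exp 1) ∧
    (2 * ((1 - ε) * liftFunctional u₂ - ε * liftFunctional u₁)) /
        ((1 / (2 * Real.pi)) *
          (Real.sqrt (1 - ε) * dragFunctional u₂ +
            Real.sqrt ε * dragFunctional u₁) ^ 2) = Real.pi := by
  obtain ⟨hε0, hε1⟩ := hε
  have he : (0:ℝ) < Real.exp 1 := Real.exp_pos 1
  have h1ε : (0:ℝ) < 1 - ε := by linarith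
  have hI1n := lift_nonneg hB₁
  have hI2le := lift_le hm₂ hB₂
  have heps : ε = 0 := by
    have h1 : ε * liftFunctional u₁ ≥ 0 := mul_nonneg hε0 hI1n
    have h2 : (1 - ε) * liftFunctional u₂ ≤ (1 - ε) * (1 / Real.exp 1) :=
      mul_le_mul_of_nonneg_left hI2le h1ε.le
    have h3 : (0:ℝ) < 1 / Real.exp 1 := by positivity
    have hle : ε ≤ 0 := by nlinarith
    linarith
  subst heps
  have hI2eq : liftFunctional u₂ = 1 / Real.exp 1 := by
    rw [sub_zero, zero_mul, sub_zero, one_mul] at hlift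
    exact hlift
  have hae := lift_eq_ae hm₂ hB₂ hI2eq
  have hdrag := drag_of_ae u₂ hae
  have hpi : (0:ℝ) < Real.pi := Real.pi_pos
  have hsq : (Real.sqrt (1 - 0) * dragFunctional u₂ +
      Real.sqrt 0 * dragFunctional u₁) ^ 2 = 4 / Real.exp 1 := by
    rw [hdrag]
    norm_num
    rw [div_pow, Real.sq_sqrt he.le]
    norm_num
  refine ⟨by ring, rfl, hae, ?_, ?_⟩
  · rw [hsq]
    field_simp
    ring
  · rw [hsq, hlift]
    field_simp
    ring
end
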